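/- arXiv:2112.08891 — 6 statements merged into one kernel-verified Lean document; each statement's English description precedes it below -/
import Mathlib

section
/- Let (i,k), (j,ℓ) ∈ Q_n with k ≠ i+1, j ≥ i+2 and ℓ ≥ j. Then (i,k) ≺ (j,ℓ). -/
/-- Membership in `Q_n`: pairs `(i,k)` with `1 ≤ i ≤ k ≤ n`. -/
def Qmem (n : ℕ) (p : ℕ × ℕ) : Prop := 1 ≤ p.1 ∧ p.1 ≤ p.2 ∧ p.2 ≤ n

/-- The relation `≺₀` on `Q_n`. -/
def prec0 (n : ℕ) (p q : ℕ × ℕ) : Prop :=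
  Qmem n p ∧ Qmem n q ∧ q.1 = p.1 + 1 ∧
  ( p.2 = p.1 ∨
    (∃ k : ℕ, 1 ≤ k ∧ p.2 = p.1 + 2 * k ∧ ∃ l < k, q.2 = p.1 + 1 + 2 * l) ∨
    (∃ k : ℕ, 1 ≤ k ∧ p.2 = p.1 + 2 * k ∧ p.1 + 2 * k + 1 ≤ q.2) ∨
    (∃ k : ℕ, 1 ≤ k ∧ p.2 = p.1 + 2 * k + 1 ∧ ∃ l < k, q.2 = p.1 + 1 + 2 * l) )

/-- The relation `≺`, the transitive closure of `≺₀`. -/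
def prec (n : ℕ) : ℕ × ℕ → ℕ × ℕ → Prop := Relation.TransGen (prec0 n)

/-- An antichain in `(Q_n, ≺)`: a subset of `Q_n` no two distinct elements
of which are related by `≺` (in either direction). -/
def IsPrecAntichain (n : ℕ) (A : Set (ℕ × ℕ)) : Prop :=
  (∀ p ∈ A, Qmem n p) ∧ ∀ p ∈ A, ∀ q ∈ A, p ≠ q → ¬ prec n p q

/-!
From `(i,k)` with `k ≠ i+1` there is a single `≺₀`-step down to the diagonal point `(i+1,i+1)`
(take `ℓ = 0` in the even or odd clause, or use the diagonal clause when `k = i`). From a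
diagonal point `(a,a)` one reaches every `(a+1,m)` in one step, in particular `(a+1,a+1)`, so
walking down the diagonal reaches every `(b,ℓ)` with `b > a`.
-/

lemma prec0_diag {n a m : ℕ} (ha : 1 ≤ a) (hq : Qmem n (a + 1, m)) :
    prec0 n (a, a) (a + 1, m) :=
  ⟨⟨ha, le_rfl, by obtain ⟨-, h, h'⟩ := hq; dsimp at h h'; omega⟩, hq, rfl, Or.inl rfl⟩

lemma prec_diag_of_lt {n a b l : ℕ} (ha : 1 ≤ a) (hab : a < b) (hq : Qmem n (b, l)) :
    prec n (a, a) (b, l) := by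
  induction b, hab using Nat.le_induction generalizing l with
  | base => exact .single (prec0_diag ha hq)
  | succ b hab ih =>
    obtain ⟨-, hbl, hln⟩ := hq
    dsimp at hbl hln
    have hb : Qmem n (b, b) := ⟨by omega, le_rfl, by omega⟩
    exact (ih hb).tail (prec0_diag (by omega) ⟨by omega, hbl, hln⟩)

lemma prec0_succ_diag {n i k : ℕ} (hp : Qmem n (i, k)) (hk : k ≠ i + 1) (hin : i + 1 ≤ n) :
    prec0 n (i, k) (i + 1, i + 1) := by
  obtain ⟨hi, hik, hkn⟩ := hp
  dsimp at hi hik hkn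
  refine ⟨⟨hi, hik, hkn⟩, ⟨by omega, le_rfl, hin⟩, rfl, ?_⟩
  obtain rfl | hik2 : k = i ∨ i + 2 ≤ k := by omega
  · exact Or.inl rfl
  · rcases Nat.even_or_odd (k - i) with ⟨c, hc⟩ | ⟨c, hc⟩
    · exact Or.inr (Or.inl ⟨c, by omega, by omega, 0, by omega, by omega⟩)
    · exact Or.inr (Or.inr (Or.inr ⟨c, by omega, by omega, 0, by omega, by omega⟩))

theorem prec_of_two_below_general (n : ℕ) (i k j l : ℕ)
    (hp : Qmem n (i, k)) (hq : Qmem n (j, l))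
    (hk : k ≠ i + 1) (hj : i + 2 ≤ j) :
    prec n (i, k) (j, l) := by
  have hin : i + 1 ≤ n := by obtain ⟨-, h, h'⟩ := hq; dsimp at h h'; omega
  exact .head (prec0_succ_diag hp hk hin) (prec_diag_of_lt (by omega) (by omega) hq)

/-- if `(i,k), (j,ℓ) ∈ Q_n` with `k ≠ i+1`, `j ≥ i+2` and `ℓ ≥ j`,
then `(i,k) ≺ (j,ℓ)`. -/
theorem prec_of_two_below (n : ℕ) (hn : 1 ≤ n) (i k j l : ℕ)
    (hp : Qmem n (i, k)) (hq : Qmem n (j, l))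
    (hk : k ≠ i + 1) (hj : i + 2 ≤ j) (hl : j ≤ l) :
    prec n (i, k) (j, l) :=
  prec_of_two_below_general n i k j l hp hq hk hj
end

section
/- The set {(i,i+1) : 1 ≤ i ≤ n−1} ∪ {(n,n)} ⊆ Q_n is an antichain of cardinality n with respect to ≺. -/
/-!
Every element of the set is maximal for `≺`: the pair `(n,n)` has no successor since its
successors would have first coordinate `n + 1`, and `(i,i+1)` has none because `≺₀` only
leaves `(i,k)` when `k = i` or `k - i ≥ 2`. A set of maximal elements is an antichain.
-/

lemma not_prec0_of_snd_eq_fst_add_one {n : ℕ} {p : ℕ × ℕ} (hp : p.2 = p.1 + 1) (q : ℕ × ℕ) :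
    ¬ prec0 n p q := by
  rintro ⟨-, -, -, h | ⟨k, hk, h, -⟩ | ⟨k, hk, h, -⟩ | ⟨k, hk, h, -⟩⟩ <;> omega

lemma not_prec0_top (n : ℕ) (q : ℕ × ℕ) : ¬ prec0 n (n, n) q := by
  rintro ⟨-, ⟨-, hq, hqn⟩, hq1, -⟩
  simp only at hq1
  omega

lemma not_prec_of_forall_not_prec0 {n : ℕ} {p : ℕ × ℕ} (hp : ∀ q, ¬ prec0 n p q) (q : ℕ × ℕ) :
    ¬ prec n p q := fun h =>
  let ⟨c, hc, _⟩ := Relation.TransGen.head'_iff.mp h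
  hp c hc

lemma isPrecAntichain_of_forall_not_prec0 {n : ℕ} {A : Set (ℕ × ℕ)} (hQ : ∀ p ∈ A, Qmem n p)
    (hmax : ∀ p ∈ A, ∀ q, ¬ prec0 n p q) : IsPrecAntichain n A :=
  ⟨hQ, fun p hp q _ _ => not_prec_of_forall_not_prec0 (hmax p hp) q⟩

lemma superdiagonal_eq_image (m : ℕ) :
    {p : ℕ × ℕ | 1 ≤ p.1 ∧ p.1 ≤ m ∧ p.2 = p.1 + 1} = (fun i => (i, i + 1)) '' Set.Icc 1 m := by
  ext ⟨i, k⟩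
  simp only [Set.mem_ofPred_eq, Set.mem_image, Set.mem_Icc, Prod.mk.injEq]
  constructor
  · rintro ⟨h1, h2, rfl⟩
    exact ⟨i, ⟨h1, h2⟩, rfl, rfl⟩
  · rintro ⟨j, ⟨h1, h2⟩, rfl, rfl⟩
    exact ⟨h1, h2, rfl⟩

lemma finite_superdiagonal (m : ℕ) :
    {p : ℕ × ℕ | 1 ≤ p.1 ∧ p.1 ≤ m ∧ p.2 = p.1 + 1}.Finite :=
  superdiagonal_eq_image m ▸ (Set.finite_Icc 1 m).image _

lemma ncard_superdiagonal (m : ℕ) :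
    {p : ℕ × ℕ | 1 ≤ p.1 ∧ p.1 ≤ m ∧ p.2 = p.1 + 1}.ncard = m := by
  rw [superdiagonal_eq_image, Set.ncard_image_of_injective _ fun i j h => congrArg Prod.fst h,
    Set.ncard_Icc_nat, Nat.add_sub_cancel]

/-- the set `{(i,i+1) : 1 ≤ i ≤ n-1} ∪ {(n,n)} ⊆ Q_n` is an antichain
of cardinality `n` with respect to `≺`. -/
theorem projective_antichain (n : ℕ) (hn : 2 ≤ n) :
    IsPrecAntichain n
        ({p : ℕ × ℕ | 1 ≤ p.1 ∧ p.1 ≤ n - 1 ∧ p.2 = p.1 + 1} ∪ {(n, n)}) ∧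
      Set.ncard ({p : ℕ × ℕ | 1 ≤ p.1 ∧ p.1 ≤ n - 1 ∧ p.2 = p.1 + 1} ∪ {(n, n)}) = n := by
  refine ⟨isPrecAntichain_of_forall_not_prec0 ?_ ?_, ?_⟩
  · rintro p (⟨h1, h2, h3⟩ | rfl)
    · exact ⟨h1, by omega, by omega⟩
    · exact ⟨by omega, le_rfl, le_rfl⟩
  · rintro p (⟨-, -, hp⟩ | rfl)
    · exact not_prec0_of_snd_eq_fst_add_one hp
    · exact not_prec0_top n
  · have htop : (n, n) ∉ {p : ℕ × ℕ | 1 ≤ p.1 ∧ p.1 ≤ n - 1 ∧ p.2 = p.1 + 1} := by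
      rintro ⟨-, h, -⟩
      omega
    rw [Set.union_singleton, Set.ncard_insert_of_notMem htop (finite_superdiagonal _), ncard_superdiagonal]
    omega
end

section
/- Every antichain A in (Q_n, ≺) of cardinality n contains an element whose second coordinate is n; that is, there exists j with (j,n) ∈ A. -/
/-!
The colouring `chainColour n : Q_n → {1, …, n}` has every colour class a `≺`-chain, so an
antichain meets each class at most once and has at most `n` elements. An antichain of `Q_n`
avoiding the second coordinate `n` is an antichain of `Q_{n-1}`, hence has at most `n - 1`
elements.
-/

def chainColour (n : ℕ) (p : ℕ × ℕ) : ℕ :=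
  if p.1 % 2 = 1 then p.2
  else if p.2 % 2 = 1 then p.2 - 2
  else if p.2 + 2 ≤ n then p.2 + 2
  else if n % 2 = 1 then n else n - 1

section

variable {n : ℕ} {p q : ℕ × ℕ}

lemma chainColour_mem_Icc (hp : Qmem n p) : chainColour n p ∈ Finset.Icc 1 n := by
  obtain ⟨h1, h2, h3⟩ := hp
  simp only [chainColour, Finset.mem_Icc]
  split_ifs <;> omega

lemma prec0_of_parity (hp : Qmem n p) (hq : Qmem n q) (h1 : q.1 = p.1 + 1)
    (h : p.2 = p.1 ∨
      (p.1 + 2 ≤ p.2 ∧ (p.2 - p.1) % 2 = 0 ∧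
        (p.2 + 1 ≤ q.2 ∨ (q.2 < p.2 ∧ (q.2 - p.1) % 2 = 1))) ∨
      (p.1 + 3 ≤ p.2 ∧ (p.2 - p.1) % 2 = 1 ∧ q.2 < p.2 ∧ (q.2 - p.1) % 2 = 1)) :
    prec0 n p q := by
  refine ⟨hp, hq, h1, ?_⟩
  rcases h with h | ⟨h2, h3, h4 | ⟨h4, h5⟩⟩ | ⟨h2, h3, h4, h5⟩
  · exact Or.inl h
  · exact Or.inr (Or.inr (Or.inl ⟨(p.2 - p.1) / 2, by omega, by omega, by omega⟩))
  · exact Or.inr (Or.inl ⟨(p.2 - p.1) / 2, by omega, by omega,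
      (q.2 - p.1 - 1) / 2, by omega, by omega⟩)
  · exact Or.inr (Or.inr (Or.inr ⟨(p.2 - p.1 - 1) / 2, by omega, by omega,
      (q.2 - p.1 - 1) / 2, by omega, by omega⟩))

set_option maxHeartbeats 1000000 in
lemma prec0_of_chainColour_eq (hp : Qmem n p) (hq : Qmem n q) (h1 : q.1 = p.1 + 1)
    (hc : chainColour n p = chainColour n q) : prec0 n p q := by
  apply prec0_of_parity hp hq h1
  obtain ⟨hp1, hp2, hp3⟩ := hp
  obtain ⟨hq1, hq2, hq3⟩ := hq
  simp only [chainColour] at hc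
  split_ifs at hc <;> omega

lemma snd_eq_of_chainColour_eq (hp : Qmem n p) (hq : Qmem n q) (h1 : p.1 = q.1)
    (hc : chainColour n p = chainColour n q) : p.2 = q.2 := by
  obtain ⟨hp1, hp2, hp3⟩ := hp
  obtain ⟨hq1, hq2, hq3⟩ := hq
  simp only [chainColour] at hc
  split_ifs at hc <;> omega

lemma chainColour_ne_of_snd_eq_fst_add_one (hp : Qmem n p) (hq : Qmem n q)
    (hgap : p.2 = p.1 + 1) (hj : p.1 + 2 ≤ q.1) : chainColour n p ≠ chainColour n q := by
  obtain ⟨hp1, hp2, hp3⟩ := hp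
  obtain ⟨hq1, hq2, hq3⟩ := hq
  simp only [chainColour]
  split_ifs <;> omega

lemma prec_diag_of_lt_s6 {r j m : ℕ} (hr : 1 ≤ r) (hrj : r < j) (hjm : j ≤ m) (hm : m ≤ n) :
    prec n (r, r) (j, m) := by
  induction j, hrj using Nat.le_induction generalizing m with
  | base => exact .single ⟨⟨hr, le_rfl, by omega⟩, ⟨by omega, hjm, hm⟩, rfl, Or.inl rfl⟩
  | succ j hj ih =>
    exact .tail (ih le_rfl (by omega))
      ⟨⟨by omega, le_rfl, by omega⟩, ⟨by omega, hjm, hm⟩, rfl, Or.inl rfl⟩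

lemma prec_of_fst_add_two_le (hp : Qmem n p) (hq : Qmem n q) (hgap : p.2 ≠ p.1 + 1)
    (hj : p.1 + 2 ≤ q.1) : prec n p q := by
  obtain ⟨hq1, hq2, hq3⟩ := hq
  have step : prec0 n p (p.1 + 1, p.1 + 1) :=
    prec0_of_parity hp ⟨by omega, le_rfl, by omega⟩ rfl (by have := hp.2.1; dsimp only; omega)
  exact .head step (prec_diag_of_lt_s6 (by omega) (by omega) hq2 hq3)

lemma prec_of_chainColour_eq (hp : Qmem n p) (hq : Qmem n q)
    (hc : chainColour n p = chainColour n q) (hlt : p.1 < q.1) : prec n p q := by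
  rcases Nat.lt_or_ge q.1 (p.1 + 2) with h | h
  · exact .single (prec0_of_chainColour_eq hp hq (by omega) hc)
  · exact prec_of_fst_add_two_le hp hq
      (fun hgap => chainColour_ne_of_snd_eq_fst_add_one hp hq hgap h hc) h

lemma prec_mono {m : ℕ} (h : m ≤ n) (hpq : prec m p q) : prec n p q :=
  Relation.TransGen.mono (fun _ _ ⟨⟨a1, a2, a3⟩, ⟨b1, b2, b3⟩, hc, hd⟩ =>
    ⟨⟨a1, a2, a3.trans h⟩, ⟨b1, b2, b3.trans h⟩, hc, hd⟩) _ _ hpq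

end

namespace IsPrecAntichain

variable {n : ℕ} {A : Set (ℕ × ℕ)}

lemma injOn_chainColour (hA : IsPrecAntichain n A) : Set.InjOn (chainColour n) A := by
  obtain ⟨hQ, hanti⟩ := hA
  intro p hp q hq hc
  by_contra hne
  rcases lt_trichotomy p.1 q.1 with h | h | h
  · exact hanti p hp q hq hne (prec_of_chainColour_eq (hQ p hp) (hQ q hq) hc h)
  · exact hne (Prod.ext h (snd_eq_of_chainColour_eq (hQ p hp) (hQ q hq) h hc))
  · exact hanti q hq p hp (Ne.symm hne) (prec_of_chainColour_eq (hQ q hq) (hQ p hp) hc.symm h)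

lemma ncard_le (hA : IsPrecAntichain n A) : A.ncard ≤ n := by
  have hsub : chainColour n '' A ⊆ (Finset.Icc 1 n : Set ℕ) := by
    rintro _ ⟨p, hp, rfl⟩
    exact chainColour_mem_Icc (hA.1 p hp)
  calc A.ncard = (chainColour n '' A).ncard := hA.injOn_chainColour.ncard_image.symm
    _ ≤ (Finset.Icc 1 n : Set ℕ).ncard := Set.ncard_le_ncard hsub (Finset.Icc 1 n).finite_toSet
    _ = n := by simp

lemma of_snd_ne (hA : IsPrecAntichain n A) (hne : ∀ p ∈ A, p.2 ≠ n) :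
    IsPrecAntichain (n - 1) A := by
  refine ⟨fun p hp => ?_, fun p hp q hq hpq h => hA.2 p hp q hq hpq (prec_mono (by omega) h)⟩
  obtain ⟨h1, h2, h3⟩ := hA.1 p hp
  exact ⟨h1, h2, by have := hne p hp; omega⟩

end IsPrecAntichain

/-- every antichain `A` of cardinality `n` in `(Q_n, ≺)` contains an
element whose second coordinate is `n`. -/
theorem antichain_contains_second_coord_n (n : ℕ) (hn : 2 ≤ n) (A : Set (ℕ × ℕ))
    (hA : IsPrecAntichain n A) (hcard : A.ncard = n) :
    ∃ j : ℕ, (j, n) ∈ A := by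
  by_contra hcon
  have hne : ∀ p ∈ A, p.2 ≠ n := fun p hp hpn => hcon ⟨p.1, by rwa [← hpn]⟩
  have := (hA.of_snd_ne hne).ncard_le
  omega
end

section
/- Let A be an antichain in (Q_n, ≺) of cardinality n. Then there exists an index i with 1 ≤ i ≤ n−1 such that every element of A is of the form (i,k), (i+1,ℓ), or (j,j+1) with j < i. -/
/-!
From any element off the superdiagonal, `(j, j)` or `(j, j + k)` with `k ≥ 2`, one `≺₀`-step
reaches the diagonal element of the next row, and diagonal elements precede everything in the
next row. Hence such an element precedes every element at least two rows below it, so in an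
antichain all elements lie at most one row below the topmost row `i` carrying such an element,
while the elements above row `i` are of the form `(j, j + 1)`.
-/

theorem prec0_diag_s7 (n : ℕ) {j m : ℕ} (hj : 1 ≤ j) (hjm : j + 1 ≤ m) (hm : m ≤ n) :
    prec0 n (j, j) (j + 1, m) :=
  ⟨⟨hj, le_rfl, by omega⟩, ⟨by omega, hjm, hm⟩, rfl, Or.inl rfl⟩

theorem prec0_diag_of_ne_succ {n : ℕ} {b : ℕ × ℕ} (hb : Qmem n b) (hoff : b.2 ≠ b.1 + 1)
    (hbn : b.1 < n) : prec0 n b (b.1 + 1, b.1 + 1) := by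
  obtain ⟨hb1, hb12, hb2⟩ := hb
  refine ⟨⟨hb1, hb12, hb2⟩, ⟨by omega, le_rfl, hbn⟩, rfl, ?_⟩
  rcases Nat.lt_or_ge b.2 (b.1 + 2) with hlt | hge
  · exact Or.inl (by omega)
  · rcases Nat.even_or_odd' (b.2 - b.1) with ⟨k, hk | hk⟩
    · exact Or.inr (Or.inl ⟨k, by omega, by omega, 0, by omega, by omega⟩)
    · exact Or.inr (Or.inr (Or.inr ⟨k, by omega, by omega, 0, by omega, by omega⟩))

theorem prec_diag_of_lt_s7 {n j : ℕ} (hj : 1 ≤ j) :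
    ∀ {p : ℕ × ℕ}, Qmem n p → j < p.1 → prec n (j, j) p := by
  rintro ⟨r, m⟩ hp (hjr : j + 1 ≤ r)
  induction r, hjr using Nat.le_induction generalizing m with
  | base => exact .single (prec0_diag_s7 n hj hp.2.1 hp.2.2)
  | succ r hjr ih =>
    obtain ⟨-, hrm, hm⟩ := hp
    exact .tail (ih r ⟨by omega, le_rfl, by dsimp at hrm hm; omega⟩)
      (prec0_diag_s7 n (by omega) hrm hm)

theorem prec_of_ne_succ {n : ℕ} {b p : ℕ × ℕ} (hb : Qmem n b) (hp : Qmem n p)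
    (hoff : b.2 ≠ b.1 + 1) (hbp : b.1 + 2 ≤ p.1) : prec n b p :=
  .head (prec0_diag_of_ne_succ hb hoff (by have := hp.2; omega))
    (prec_diag_of_lt_s7 (by omega) hp (by omega))

theorem IsPrecAntichain.fst_le_succ {n : ℕ} {A : Set (ℕ × ℕ)} (hA : IsPrecAntichain n A)
    {b p : ℕ × ℕ} (hb : b ∈ A) (hp : p ∈ A) (hoff : b.2 ≠ b.1 + 1) : p.1 ≤ b.1 + 1 := by
  by_contra! hbp
  exact hA.2 b hb p hp (by rintro rfl; omega) (prec_of_ne_succ (hA.1 b hb) (hA.1 p hp) hoff hbp)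

theorem antichain_in_tier_general (n : ℕ) (hn : 2 ≤ n) (A : Set (ℕ × ℕ))
    (hA : IsPrecAntichain n A) :
    ∃ i : ℕ, 1 ≤ i ∧ i ≤ n - 1 ∧
      ∀ p ∈ A, p.1 = i ∨ p.1 = i + 1 ∨ (p.1 < i ∧ p.2 = p.1 + 1) := by
  classical
  -- `i` is the topmost row containing an element off the superdiagonal, capped at `n - 1`.
  let P : ℕ → Prop := fun r => r = n - 1 ∨ ∃ b ∈ A, b.1 = r ∧ b.2 ≠ b.1 + 1
  have hP : ∃ r, P r := ⟨n - 1, Or.inl rfl⟩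
  refine ⟨Nat.find hP, ?_, Nat.find_min' hP (Or.inl rfl), fun p hp => ?_⟩
  · rcases Nat.find_spec hP with hi | ⟨b, hb, hbi, -⟩
    · omega
    · exact hbi ▸ (hA.1 b hb).1
  have hp_le : p.1 ≤ Nat.find hP + 1 := by
    rcases Nat.find_spec hP with hi | ⟨b, hb, hbi, hoff⟩
    · have := (hA.1 p hp).2
      omega
    · exact hbi ▸ hA.fst_le_succ hb hp hoff
  rcases Nat.lt_or_ge p.1 (Nat.find hP) with hlt | hge
  · refine Or.inr (Or.inr ⟨hlt, ?_⟩)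
    by_contra hoff
    exact Nat.find_min hP hlt (Or.inr ⟨p, hp, rfl, hoff⟩)
  · omega

/-- every antichain `A` of cardinality `n` in `(Q_n, ≺)` lies in some tier:
there is `1 ≤ i ≤ n-1` such that each element of `A` is of the form `(i,k)`,
`(i+1,ℓ)`, or `(j,j+1)` with `j < i`. -/
theorem antichain_in_tier (n : ℕ) (hn : 2 ≤ n) (A : Set (ℕ × ℕ))
    (hA : IsPrecAntichain n A) (hcard : A.ncard = n) :
    ∃ i : ℕ, 1 ≤ i ∧ i ≤ n - 1 ∧
      ∀ p ∈ A, p.1 = i ∨ p.1 = i + 1 ∨ (p.1 < i ∧ p.2 = p.1 + 1) :=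
  antichain_in_tier_general n hn A hA
end

section
/- The number of antichains of cardinality n in the graded poset (Q_n, ≺) is exactly n(n−1)/2 + 1. -/
/-!
Call `a` the offset of `(i, i + a)` in row `i`. The relation `≺₀` only links consecutive rows,
through `OffsetCovers` on the offsets. Elements of offset `1` are maximal, while any other element
covers the diagonal element of the next row, which lies below every element of the later rows.
So if `r` is the first row in which an antichain `A` has an element of offset `≠ 1`, then `A` meets
the rows below `r` only in the staircase `(1, 2), …, (r - 1, r)` and has nothing beyond row
`r + 1`. A parity analysis confines the offsets of `A` in rows `r` and `r + 1` to
`lowerOffsets (n - r) t` and `upperOffsets (n - r) t` for a single `t ≤ n - r`; these have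
`n - r + 1 - t` and `t` elements, so the antichains of size `n` are exactly the sets
`family n r t`. As `t` is the size of the top row `r + 1`, these are distinct for `t ≥ 1`, and
for `t = 0` only the full first row `family n 1 0` is new: `∑_{s < n} s + 1` antichains in all.
-/

namespace QPoset

open Finset

/-- `(i, i + a) ≺₀ (i + 1, i + 1 + b)` exactly when `OffsetCovers a b` (see `prec0_iff`). -/
def OffsetCovers (a b : ℕ) : Prop :=
  a = 0 ∨ 2 ≤ a ∧ (b % 2 = 0 ∧ b + 1 < a ∨ a % 2 = 0 ∧ a ≤ b)

theorem prec0_iff {n : ℕ} {p q : ℕ × ℕ} :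
    prec0 n p q ↔ Qmem n p ∧ Qmem n q ∧ q.1 = p.1 + 1 ∧ OffsetCovers (p.2 - p.1) (q.2 - q.1) := by
  refine and_congr_right fun hp => and_congr_right fun hq => and_congr_right fun hrow => ?_
  obtain ⟨-, hp, -⟩ := hp
  obtain ⟨-, hq, -⟩ := hq
  unfold OffsetCovers
  constructor
  · rintro (h | ⟨k, -, h, l, hl, h'⟩ | ⟨k, -, h, h'⟩ | ⟨k, -, h, l, hl, h'⟩) <;> omega
  · rintro (h | ⟨h2, ⟨hb, hba⟩ | ⟨ha, hab⟩⟩)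
    · exact .inl (by omega)
    · rcases Nat.mod_two_eq_zero_or_one (p.2 - p.1) with ha | ha
      · exact .inr (.inl ⟨(p.2 - p.1) / 2, by omega, by omega, (q.2 - q.1) / 2, by omega, by omega⟩)
      · exact .inr (.inr (.inr
          ⟨(p.2 - p.1) / 2, by omega, by omega, (q.2 - q.1) / 2, by omega, by omega⟩))
    · exact .inr (.inr (.inl ⟨(p.2 - p.1) / 2, by omega, by omega, by omega⟩))

theorem prec_diagonal {n i : ℕ} (hi : 1 ≤ i) {q : ℕ × ℕ} (hq : Qmem n q) (hiq : i < q.1) :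
    prec n (i, i) q := by
  obtain ⟨j, k⟩ := q
  induction j generalizing k with
  | zero => omega
  | succ j ih =>
    obtain ⟨-, hjk, hkn⟩ := hq
    have hcov : prec0 n (j, j) (j + 1, k) :=
      prec0_iff.2 ⟨⟨by omega, le_rfl, by omega⟩, ⟨by omega, hjk, hkn⟩, rfl, .inl (Nat.sub_self j)⟩
    rcases (Nat.lt_succ_iff.1 hiq).eq_or_lt with rfl | hlt
    · exact .single hcov
    · exact (ih j ⟨by omega, le_rfl, by omega⟩ hlt).tail hcov

/-- Beyond the adjacent row, `p` lies below everything exactly when it is not of the form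
`(i, i + 1)`: it then covers the diagonal element of the next row. -/
theorem prec_iff {n : ℕ} {p q : ℕ × ℕ} :
    prec n p q ↔ prec0 n p q ∨ Qmem n p ∧ Qmem n q ∧ p.1 + 2 ≤ q.1 ∧ p.2 ≠ p.1 + 1 := by
  constructor
  · intro h
    induction h with
    | single h => exact .inl h
    | tail _ hxq ih =>
      obtain ⟨-, hq, hrow, -⟩ := prec0_iff.1 hxq
      rcases ih with h | ⟨hp, -, hle, hne⟩
      · obtain ⟨hp, -, hrow', hcov⟩ := prec0_iff.1 h
        exact .inr ⟨hp, hq, by omega, by unfold OffsetCovers at hcov; omega⟩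
      · exact .inr ⟨hp, hq, by omega, hne⟩
  · rintro (h | ⟨hp, hq, hle, hne⟩)
    · exact .single h
    · have hcov : prec0 n p (p.1 + 1, p.1 + 1) := by
        obtain ⟨-, hq12, hqn⟩ := hq
        refine prec0_iff.2 ⟨hp, ⟨by omega, le_rfl, by omega⟩, rfl, ?_⟩
        unfold OffsetCovers
        obtain ⟨-, hp, -⟩ := hp
        omega
      exact .head hcov (prec_diagonal (by omega) hq (by omega))

theorem mem_image_two_mul_add_one {k d : ℕ} :
    d ∈ (range k).image (fun j => 2 * j + 1) ↔ d % 2 = 1 ∧ d < 2 * k := by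
  simp only [mem_image, mem_range]
  exact ⟨fun ⟨j, hj, hd⟩ => by omega, fun h => ⟨d / 2, by omega, by omega⟩⟩

theorem card_image_two_mul_add_one (k : ℕ) :
    ((range k).image (fun j => 2 * j + 1)).card = k := by
  rw [card_image_of_injective _ fun a b (h : 2 * a + 1 = 2 * b + 1) => by omega, card_range]

def lowerOffsets (M t : ℕ) : Finset ℕ :=
  (range (min t (M + 1 - t))).image (fun j => 2 * j + 1) ∪ Icc (2 * t) M

def upperOffsets (M t : ℕ) : Finset ℕ :=
  (range (min t (M - t))).image (fun j => 2 * j + 1) ∪ Ico (2 * (M - t)) M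

theorem mem_lowerOffsets {M t d : ℕ} :
    d ∈ lowerOffsets M t ↔ d % 2 = 1 ∧ d < 2 * t ∧ d < 2 * (M + 1 - t) ∨ 2 * t ≤ d ∧ d ≤ M := by
  rw [lowerOffsets, mem_union, mem_image_two_mul_add_one, mem_Icc]
  omega

theorem mem_upperOffsets {M t e : ℕ} :
    e ∈ upperOffsets M t ↔ e % 2 = 1 ∧ e < 2 * t ∧ e < 2 * (M - t) ∨ 2 * (M - t) ≤ e ∧ e < M := by
  rw [upperOffsets, mem_union, mem_image_two_mul_add_one, mem_Ico]
  omega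

theorem card_lowerOffsets {M t : ℕ} (ht : t ≤ M) : (lowerOffsets M t).card = M + 1 - t := by
  rw [lowerOffsets, card_union_of_disjoint, card_image_two_mul_add_one, Nat.card_Icc]
  · omega
  · exact disjoint_left.2 fun d h h' => by
      rw [mem_image_two_mul_add_one] at h; rw [mem_Icc] at h'; omega

theorem card_upperOffsets {M t : ℕ} (ht : t ≤ M) : (upperOffsets M t).card = t := by
  rw [upperOffsets, card_union_of_disjoint, card_image_two_mul_add_one, Nat.card_Ico]
  · omega
  · exact disjoint_left.2 fun d h h' => by
      rw [mem_image_two_mul_add_one] at h; rw [mem_Ico] at h'; omega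

theorem not_offsetCovers_of_mem {M t d e : ℕ} (hd : d ∈ lowerOffsets M t)
    (he : e ∈ upperOffsets M t) : ¬OffsetCovers d e := by
  rw [mem_lowerOffsets] at hd
  rw [mem_upperOffsets] at he
  unfold OffsetCovers
  omega

theorem exists_subset_offsets {M : ℕ} {B C : Set ℕ} (hB : ∀ d ∈ B, d ≤ M) (hC : ∀ e ∈ C, e < M)
    (hBC : ∀ d ∈ B, ∀ e ∈ C, ¬OffsetCovers d e) :
    ∃ t ≤ M, B ⊆ lowerOffsets M t ∧ C ⊆ upperOffsets M t := by
  classical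
  unfold OffsetCovers at hBC
  by_cases hev : ∃ d ∈ B, d % 2 = 0
  · -- the least even offset `d₀ ∈ B` forces `C` to consist of odd offsets below `d₀`
    obtain ⟨hd₀, hd₀even⟩ := Nat.find_spec hev
    have hmin : ∀ d ∈ B, d % 2 = 0 → Nat.find hev ≤ d :=
      fun d hd he => Nat.find_min' hev ⟨hd, he⟩
    have := hB _ hd₀
    refine ⟨Nat.find hev / 2, by omega, fun d hd => ?_, fun e he => ?_⟩
    · have := hB d hd
      have := hmin d hd
      rw [mem_coe, mem_lowerOffsets]
      omega
    · have := hC e he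
      have := hBC _ hd₀ e he
      rw [mem_coe, mem_upperOffsets]
      omega
  · -- all offsets in `B` are odd, and the largest one, `d₁`, forces the even offsets in `C`
    -- to be at least `d₁ - 1`
    push Not at hev
    obtain ⟨d₁, hd₁, hmax⟩ := Set.exists_max_image (insert 1 B) id
      (((Set.finite_Iic M).subset hB).insert 1) (Set.insert_nonempty 1 B)
    simp only [id] at hmax
    refine ⟨M - (d₁ - 1) / 2, Nat.sub_le _ _, fun d hd => ?_, fun e he => ?_⟩
    · have := hmax d (.inr hd)
      have := hev d hd
      have := hB d hd
      rw [mem_coe, mem_lowerOffsets]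
      rcases hd₁ with rfl | hd₁
      · omega
      · have := hev _ hd₁
        have := hB _ hd₁
        omega
    · have := hC e he
      rw [mem_coe, mem_upperOffsets]
      rcases hd₁ with rfl | hd₁
      · omega
      · have := hev _ hd₁
        have := hB _ hd₁
        have := hBC _ hd₁ e he
        omega

def staircase (r : ℕ) : Finset (ℕ × ℕ) := (Ico 1 r).image fun i => (i, i + 1)

def row (i : ℕ) (D : Finset ℕ) : Finset (ℕ × ℕ) := D.image fun d => (i, i + d)

theorem mem_staircase {r : ℕ} {p : ℕ × ℕ} :
    p ∈ staircase r ↔ 1 ≤ p.1 ∧ p.1 < r ∧ p.2 = p.1 + 1 := by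
  simp only [staircase, mem_image, mem_Ico]
  exact ⟨fun ⟨i, hi, hp⟩ => hp ▸ ⟨hi.1, hi.2, rfl⟩, fun h => ⟨p.1, ⟨h.1, h.2.1⟩, by rw [← h.2.2]⟩⟩

theorem mem_row {i : ℕ} {D : Finset ℕ} {p : ℕ × ℕ} :
    p ∈ row i D ↔ p.1 = i ∧ i ≤ p.2 ∧ p.2 - i ∈ D := by
  simp only [row, mem_image]
  constructor
  · rintro ⟨d, hd, rfl⟩
    simpa using hd
  · rintro ⟨h1, h2, hD⟩
    exact ⟨_, hD, Prod.ext h1.symm (by omega)⟩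

theorem card_staircase (r : ℕ) : (staircase r).card = r - 1 := by
  rw [staircase, card_image_of_injective _ fun a b h => (Prod.mk.inj h).1, Nat.card_Ico]

theorem card_row (i : ℕ) (D : Finset ℕ) : (row i D).card = D.card :=
  card_image_of_injective _ fun a b h => by simpa using (Prod.mk.inj h).2

def family (n r t : ℕ) : Finset (ℕ × ℕ) :=
  staircase r ∪ row r (lowerOffsets (n - r) t) ∪ row (r + 1) (upperOffsets (n - r) t)

theorem mem_family {n r t : ℕ} {p : ℕ × ℕ} :
    p ∈ family n r t ↔ (1 ≤ p.1 ∧ p.1 < r ∧ p.2 = p.1 + 1) ∨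
      (p.1 = r ∧ r ≤ p.2 ∧ p.2 - r ∈ lowerOffsets (n - r) t) ∨
      (p.1 = r + 1 ∧ r + 1 ≤ p.2 ∧ p.2 - (r + 1) ∈ upperOffsets (n - r) t) := by
  rw [family, mem_union, mem_union, mem_staircase, mem_row, mem_row, or_assoc]

theorem fst_le_of_mem_family {n r t : ℕ} {p : ℕ × ℕ} (hp : p ∈ family n r t) : p.1 ≤ r + 1 := by
  rw [mem_family] at hp
  omega

theorem card_family {n r t : ℕ} (hr : 1 ≤ r) (hrn : r ≤ n) (ht : t ≤ n - r) :
    (family n r t).card = n := by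
  have hdisj₁ : Disjoint (staircase r) (row r (lowerOffsets (n - r) t)) :=
    disjoint_left.2 fun p h h' => by rw [mem_staircase] at h; rw [mem_row] at h'; omega
  have hdisj₂ : Disjoint (staircase r ∪ row r (lowerOffsets (n - r) t))
      (row (r + 1) (upperOffsets (n - r) t)) :=
    disjoint_left.2 fun p h h' => by
      rw [mem_union, mem_staircase, mem_row] at h; rw [mem_row] at h'; omega
  rw [family, card_union_of_disjoint hdisj₂, card_union_of_disjoint hdisj₁, card_staircase,
    card_row, card_row, card_lowerOffsets ht, card_upperOffsets ht]
  omega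

theorem card_filter_family {n r t : ℕ} (ht : t ≤ n - r) :
    ((family n r t).filter (·.1 = r + 1)).card = t := by
  have : (family n r t).filter (·.1 = r + 1) = row (r + 1) (upperOffsets (n - r) t) := by
    ext p
    simp only [mem_filter, mem_family, mem_row, mem_lowerOffsets, mem_upperOffsets]
    omega
  rw [this, card_row, card_upperOffsets ht]

theorem family_succ_zero {n r : ℕ} (hr : 1 ≤ r) (hrn : r < n) :
    family n (r + 1) 0 = family n r (n - r) := by
  ext p
  simp only [mem_family, mem_lowerOffsets, mem_upperOffsets]
  omega

theorem family_isPrecAntichain {n r t : ℕ} (hr : 1 ≤ r) (hrn : r ≤ n) :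
    IsPrecAntichain n (family n r t) := by
  refine ⟨fun p hp => ?_, fun p hp q hq _ hpq => ?_⟩
  · rw [mem_coe, mem_family, mem_lowerOffsets, mem_upperOffsets] at hp
    unfold Qmem
    omega
  · rw [mem_coe, mem_family] at hp hq
    rcases prec_iff.1 hpq with hpq | ⟨-, -, hle, hne⟩
    · obtain ⟨-, -, hrow, hcov⟩ := prec0_iff.1 hpq
      rcases hp with hp | ⟨rfl, hrp, hp⟩ | hp
      · unfold OffsetCovers at hcov
        omega
      · rcases hq with hq | ⟨hq1, hrq, hq⟩ | ⟨-, hrq, hq⟩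
        · omega
        · omega
        · refine not_offsetCovers_of_mem hp hq ?_
          rwa [hrow] at hcov
      · omega
    · omega

theorem exists_subset_family {n : ℕ} (hn : 1 ≤ n) {A : Set (ℕ × ℕ)} (hA : IsPrecAntichain n A) :
    ∃ r t, 1 ≤ r ∧ r ≤ n ∧ t ≤ n - r ∧ A ⊆ family n r t := by
  classical
  obtain ⟨hQ, hanti⟩ := hA
  by_cases hst : ∀ p ∈ A, p.2 = p.1 + 1
  · refine ⟨n, 0, hn, le_rfl, Nat.zero_le _, fun p hp => ?_⟩
    have := hQ p hp
    have := hst p hp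
    rw [mem_coe, mem_family]
    unfold Qmem at *
    omega
  push Not at hst
  have hex : ∃ r, ∃ p ∈ A, p.1 = r ∧ p.2 ≠ p.1 + 1 :=
    let ⟨p, hp, hne⟩ := hst; ⟨p.1, p, hp, rfl, hne⟩
  obtain ⟨p₀, hp₀, hp₀r, hp₀ne⟩ := Nat.find_spec hex
  set r := Nat.find hex
  have below : ∀ q ∈ A, q.1 < r → q.2 = q.1 + 1 := fun q hq hqr => by
    by_contra hne
    exact Nat.find_min hex hqr ⟨q, hq, rfl, hne⟩
  have above : ∀ q ∈ A, q.1 ≤ r + 1 := fun q hq => by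
    by_contra hlt
    exact hanti p₀ hp₀ q hq (fun h => by rw [h] at hp₀r; omega)
      (prec_iff.2 (.inr ⟨hQ p₀ hp₀, hQ q hq, by omega, hp₀ne⟩))
  obtain ⟨hp₀1, hp₀2, hp₀n⟩ := hQ p₀ hp₀
  obtain ⟨t, ht, hB, hC⟩ := exists_subset_offsets (M := n - r)
    (B := {d | (r, r + d) ∈ A}) (C := {e | (r + 1, r + 1 + e) ∈ A})
    (fun d hd => by have := (hQ _ hd).2.2; dsimp only at this; omega)
    (fun e he => by have := (hQ _ he).2.2; dsimp only at this; omega)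
    (fun d hd e he hcov => hanti _ hd _ he (fun h => by simpa using congrArg Prod.fst h)
      (.single (prec0_iff.2 ⟨hQ _ hd, hQ _ he, rfl, by simpa using hcov⟩)))
  refine ⟨r, t, by omega, by omega, ht, fun q hq => ?_⟩
  obtain ⟨i, k⟩ := q
  obtain ⟨hi, hik, -⟩ := hQ _ hq
  rw [mem_coe, mem_family]
  rcases lt_trichotomy i r with hir | rfl | hir
  · exact .inl ⟨hi, hir, below _ hq hir⟩
  · exact .inr (.inl ⟨rfl, hik, hB (show (r, r + (k - r)) ∈ A by rwa [Nat.add_sub_cancel' hik])⟩)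
  · obtain rfl : i = r + 1 := le_antisymm (above _ hq) hir
    exact .inr (.inr ⟨rfl, hik, hC (show (r + 1, r + 1 + (k - (r + 1))) ∈ A by
      rwa [Nat.add_sub_cancel' hik])⟩)

theorem isPrecAntichain_and_ncard_eq_iff {n : ℕ} (hn : 1 ≤ n) {A : Set (ℕ × ℕ)} :
    IsPrecAntichain n A ∧ A.ncard = n ↔
      ∃ r t, 1 ≤ r ∧ r ≤ n ∧ t ≤ n - r ∧ A = family n r t := by
  constructor
  · rintro ⟨hA, hcard⟩
    obtain ⟨r, t, hr, hrn, ht, hsub⟩ := exists_subset_family hn hA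
    refine ⟨r, t, hr, hrn, ht, Set.eq_of_subset_of_ncard_le hsub ?_ (finite_toSet _)⟩
    rw [Set.ncard_coe_finset, card_family hr hrn ht, hcard]
  · rintro ⟨r, t, hr, hrn, ht, rfl⟩
    exact ⟨family_isPrecAntichain hr hrn, by rw [Set.ncard_coe_finset, card_family hr hrn ht]⟩

theorem le_of_family_eq {n r r' t t' : ℕ} (h : family n r t = family n r' t') (ht : 1 ≤ t)
    (htr : t ≤ n - r) : r ≤ r' := by
  obtain ⟨p, hp⟩ : ((family n r t).filter (·.1 = r + 1)).Nonempty := by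
    rw [← card_pos, card_filter_family htr]
    exact ht
  rw [mem_filter, h] at hp
  have := fst_le_of_mem_family hp.1
  omega

/-- `⟨s, t⟩` indexes `family n (n - s) t`. -/
def familyIndex (n : ℕ) : Finset (Σ _ : ℕ, ℕ) := (range n).sigma fun s => Icc 1 s

theorem mem_familyIndex {n : ℕ} {x : Σ _ : ℕ, ℕ} :
    x ∈ familyIndex n ↔ x.1 < n ∧ 1 ≤ x.2 ∧ x.2 ≤ x.1 := by
  rw [familyIndex, mem_sigma, mem_range, mem_Icc]

theorem card_familyIndex (n : ℕ) : (familyIndex n).card = n * (n - 1) / 2 := by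
  simp [familyIndex, card_sigma, sum_range_id]

theorem family_injOn (n : ℕ) :
    Set.InjOn (fun x : Σ _ : ℕ, ℕ => (family n (n - x.1) x.2 : Set (ℕ × ℕ))) (familyIndex n) := by
  rintro ⟨s, t⟩ hx ⟨s', t'⟩ hx' h
  simp only [mem_coe, mem_familyIndex] at hx hx'
  replace h : family n (n - s) t = family n (n - s') t' := coe_inj.1 h
  obtain rfl : s = s' := by
    have := le_of_family_eq h hx.2.1 (by omega)
    have := le_of_family_eq h.symm hx'.2.1 (by omega)
    omega
  obtain rfl : t = t' := by
    rw [← card_filter_family (n := n) (r := n - s) (t := t) (by omega), h,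
      card_filter_family (n := n) (by omega)]
  rfl

theorem family_one_zero_notMem_image {n : ℕ} :
    (family n 1 0 : Set (ℕ × ℕ)) ∉
      (fun x : Σ _ : ℕ, ℕ => (family n (n - x.1) x.2 : Set (ℕ × ℕ))) '' familyIndex n := by
  rintro ⟨⟨s, t⟩, hx, h⟩
  simp only [mem_coe, mem_familyIndex] at hx
  replace h : family n (n - s) t = family n 1 0 := coe_inj.1 h
  have := le_of_family_eq h hx.2.1 (by omega)
  rw [show n - s = 1 by omega] at h
  have := card_filter_family (n := n) (r := 1) (t := 0) (Nat.zero_le _)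
  rw [← h, card_filter_family (by omega)] at this
  omega

theorem setOf_isPrecAntichain_and_ncard_eq {n : ℕ} (hn : 1 ≤ n) :
    {A : Set (ℕ × ℕ) | IsPrecAntichain n A ∧ A.ncard = n} =
      insert (family n 1 0 : Set (ℕ × ℕ))
        ((fun x : Σ _ : ℕ, ℕ => (family n (n - x.1) x.2 : Set (ℕ × ℕ))) '' familyIndex n) := by
  ext A
  simp only [isPrecAntichain_and_ncard_eq_iff hn, Set.mem_insert_iff, Set.mem_image, mem_coe,
    mem_familyIndex, Sigma.exists]
  constructor
  · rintro ⟨r, t, hr, hrn, ht, rfl⟩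
    rcases Nat.eq_zero_or_pos t with rfl | htpos
    · rcases hr.eq_or_lt with rfl | hr
      · exact .inl rfl
      · obtain ⟨r, rfl⟩ : ∃ r', r = r' + 1 := ⟨r - 1, by omega⟩
        refine .inr ⟨n - r, n - r, ⟨by omega, by omega, le_rfl⟩, ?_⟩
        rw [family_succ_zero (by omega) (by omega), Nat.sub_sub_self (by omega)]
    · exact .inr ⟨n - r, t, ⟨by omega, htpos, ht⟩, by rw [Nat.sub_sub_self hrn]⟩
  · rintro (rfl | ⟨s, t, hx, rfl⟩)
    · exact ⟨1, 0, le_rfl, hn, Nat.zero_le _, rfl⟩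
    · exact ⟨n - s, t, by omega, by omega, by omega, rfl⟩

end QPoset

/-- the number of antichains of cardinality `n` in the graded poset
`(Q_n, ≺)` is exactly `n(n-1)/2 + 1`. -/
theorem count_antichains (n : ℕ) (hn : 2 ≤ n) :
    Set.ncard {A : Set (ℕ × ℕ) | IsPrecAntichain n A ∧ A.ncard = n} =
      n * (n - 1) / 2 + 1 := by
  rw [QPoset.setOf_isPrecAntichain_and_ncard_eq (by omega),
    Set.ncard_insert_of_notMem QPoset.family_one_zero_notMem_image,
    (QPoset.family_injOn n).ncard_image, Set.ncard_coe_finset, QPoset.card_familyIndex]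
end

section
/- The antichains A(i,x) for 1 ≤ i ≤ n−1, i < x ≤ n are pairwise distinct and distinct from {(1,k) : 1 ≤ k ≤ n}; in particular distinct pairs (i,x) ≠ (i',x') give A(i,x) ≠ A(i',x'). -/
/-- The antichain `A(i,x)` of the paper (candidate generalized tilting module in the
`i`-th tier): `{(j,j+1) : 1 ≤ j ≤ i-1} ∪ {(i,x),(i+1,x)}`, together with the elements
`(i,k)` for `i+1 ≤ k ≤ x-1` with `k ≡ i+1 (mod 2)`, the elements `(i+1,ℓ)` for
`i+2 ≤ ℓ ≤ x-1` with `ℓ ≡ i (mod 2)`, and the tail `(i,k)` (resp. `(i+1,k)`) for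
`x+1 ≤ k ≤ n` when `x ≡ i (mod 2)` (resp. `x ≢ i (mod 2)`). -/
def Afam (n i x : ℕ) : Set (ℕ × ℕ) :=
  {p : ℕ × ℕ | p.2 = p.1 + 1 ∧ 1 ≤ p.1 ∧ p.1 < i} ∪
  {(i, x), (i + 1, x)} ∪
  {p : ℕ × ℕ | p.1 = i ∧ i + 1 ≤ p.2 ∧ p.2 < x ∧ p.2 % 2 = (i + 1) % 2} ∪
  {p : ℕ × ℕ | p.1 = i + 1 ∧ i + 2 ≤ p.2 ∧ p.2 < x ∧ p.2 % 2 = i % 2} ∪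
  (if x % 2 = i % 2 then {p : ℕ × ℕ | p.1 = i ∧ x + 1 ≤ p.2 ∧ p.2 ≤ n}
   else {p : ℕ × ℕ | p.1 = i + 1 ∧ x + 1 ≤ p.2 ∧ p.2 ≤ n})

/-!
`A(i,x)` determines `(i,x)`: the largest first coordinate occurring in it is `i + 1`, and
`x` is the only column `y` in which both `(i,y)` and `(i+1,y)` occur (below `x` the two rows
take columns of opposite parities, above `x` only one row has a tail). Since `(i+1,x)` lies
outside the first row for `i ≥ 1`, `A(i,x)` is not the first row either.
-/

section Afam

variable {n i x : ℕ}

theorem fst_le_succ_of_mem_Afam {p : ℕ × ℕ} (hp : p ∈ Afam n i x) : p.1 ≤ i + 1 := by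
  obtain ⟨a, b⟩ := p
  unfold Afam at hp
  split_ifs at hp <;> simp only [Set.mem_union, Set.mem_ofPred_eq, Set.mem_insert_iff,
    Set.mem_singleton_iff, Prod.mk.injEq] at hp <;> omega

theorem mk_mem_Afam_and_succ_mk_mem_Afam_iff {y : ℕ} :
    (i, y) ∈ Afam n i x ∧ (i + 1, y) ∈ Afam n i x ↔ y = x := by
  constructor
  · unfold Afam
    split_ifs <;> simp only [Set.mem_union, Set.mem_ofPred_eq, Set.mem_insert_iff,
      Set.mem_singleton_iff, Prod.mk.injEq] <;> omega
  · rintro rfl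
    simp [Afam]

theorem Afam_inj {i' x' : ℕ} : Afam n i x = Afam n i' x' ↔ (i, x) = (i', x') := by
  refine ⟨fun h => ?_, congrArg (fun p : ℕ × ℕ => Afam n p.1 p.2)⟩
  have hmem {i x : ℕ} : (i, x) ∈ Afam n i x ∧ (i + 1, x) ∈ Afam n i x :=
    mk_mem_Afam_and_succ_mk_mem_Afam_iff.2 rfl
  have hle : i + 1 ≤ i' + 1 := fst_le_succ_of_mem_Afam (h ▸ hmem.2)
  have hge : i' + 1 ≤ i + 1 := fst_le_succ_of_mem_Afam (h.symm ▸ hmem.2)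
  obtain rfl : i = i' := by omega
  have hx : x' = x := mk_mem_Afam_and_succ_mk_mem_Afam_iff.1 (by rw [h]; exact hmem)
  rw [hx]

end Afam

theorem Afam_pairwise_distinct_general (n : ℕ) :
    (∀ i x i' x' : ℕ, 1 ≤ i → i ≤ n - 1 → i < x → x ≤ n →
        1 ≤ i' → i' ≤ n - 1 → i' < x' → x' ≤ n →
        (i, x) ≠ (i', x') → Afam n i x ≠ Afam n i' x') ∧
    (∀ i x : ℕ, 1 ≤ i → i ≤ n - 1 → i < x → x ≤ n →
        Afam n i x ≠ {p : ℕ × ℕ | p.1 = 1 ∧ 1 ≤ p.2 ∧ p.2 ≤ n}) := by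
  refine ⟨fun i x i' x' _ _ _ _ _ _ _ _ hne => mt Afam_inj.1 hne, ?_⟩
  intro i x hi _ _ _ heq
  have hmem : (i + 1, x) ∈ Afam n i x := (mk_mem_Afam_and_succ_mk_mem_Afam_iff.2 rfl).2
  rw [heq] at hmem
  exact absurd hmem.1 (by omega)

/-- the antichains `A(i,x)` for `1 ≤ i ≤ n-1`, `i < x ≤ n` are pairwise
distinct and distinct from `{(1,k) : 1 ≤ k ≤ n}`. -/
theorem Afam_pairwise_distinct (n : ℕ) (hn : 2 ≤ n) :
    (∀ i x i' x' : ℕ, 1 ≤ i → i ≤ n - 1 → i < x → x ≤ n →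
        1 ≤ i' → i' ≤ n - 1 → i' < x' → x' ≤ n →
        (i, x) ≠ (i', x') → Afam n i x ≠ Afam n i' x') ∧
    (∀ i x : ℕ, 1 ≤ i → i ≤ n - 1 → i < x → x ≤ n →
        Afam n i x ≠ {p : ℕ × ℕ | p.1 = 1 ∧ 1 ≤ p.2 ∧ p.2 ≤ n}) :=
  Afam_pairwise_distinct_general n
end
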